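/- arXiv:2401.14644 — 6 statements merged into one kernel-verified Lean document; each statement's English description precedes it below -/
import Mathlib

section
/- The row-balanced incidence algebra K¹𝒫 is a unital K-subalgebra of the incidence algebra K𝒫; the row-centralized subspace K₀¹𝒫 satisfies K𝒫 · K₀¹𝒫 ⊆ K₀¹𝒫 and K₀¹𝒫 · K¹𝒫 ⊆ K₀¹𝒫 (so K₀¹𝒫 is a K𝒫–K¹𝒫-bimodule); and K¹𝒫 is the internal direct sum of K-vector spaces K·Id_n ⊕ K₀¹𝒫. -/
open Matrix

/-- A finite poset structure on `{1,…,n}` (modeled as `Fin n`) whose order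
relation refines the natural linear order: `i ⪯ j` implies `i ≤ j`. -/
structure PosetOn (n : ℕ) where
  le : Fin n → Fin n → Prop
  le_refl : ∀ i, le i i
  le_trans : ∀ {i j k : Fin n}, le i j → le j k → le i k
  le_compat : ∀ {i j : Fin n}, le i j → i ≤ j

/-- The incidence algebra `K𝒫` as a set of `n × n` matrices:
`M j i ≠ 0` implies `i ⪯ j`. -/
def KPset (K : Type) [Field K] {n : ℕ} (P : PosetOn n) : Set (Matrix (Fin n) (Fin n) K) :=
  {M | ∀ j i, M j i ≠ 0 → P.le i j}

/-- The row-balanced incidence algebra `K¹𝒫`: matrices of `K𝒫` with `M𝟙 ∈ K𝟙`. -/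
def KPoneSet (K : Type) [Field K] {n : ℕ} (P : PosetOn n) : Set (Matrix (Fin n) (Fin n) K) :=
  {M | M ∈ KPset K P ∧ ∃ c : K, M *ᵥ (fun _ => 1) = fun _ => c}

/-- The row-centralized subspace `K₀¹𝒫`: matrices of `K𝒫` with `M𝟙 = 0`. -/
def KP0Set (K : Type) [Field K] {n : ℕ} (P : PosetOn n) : Set (Matrix (Fin n) (Fin n) K) :=
  {M | M ∈ KPset K P ∧ M *ᵥ (fun _ => 1) = 0}

lemma KPset_mul (K : Type) [Field K] {n : ℕ} (P : PosetOn n)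
    {a b : Matrix (Fin n) (Fin n) K} (ha : a ∈ KPset K P) (hb : b ∈ KPset K P) :
    a * b ∈ KPset K P := by
  intro j i h
  rw [Matrix.mul_apply] at h
  obtain ⟨k, -, hk⟩ := Finset.exists_ne_zero_of_sum_ne_zero h
  exact P.le_trans (hb k i fun h0 => hk (by rw [h0, mul_zero]))
    (ha j k fun h0 => hk (by rw [h0, zero_mul]))

lemma KPset_one (K : Type) [Field K] {n : ℕ} (P : PosetOn n) :
    (1 : Matrix (Fin n) (Fin n) K) ∈ KPset K P := by
  intro j i h
  by_cases hij : i = j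
  · exact hij ▸ P.le_refl i
  · exact absurd (Matrix.one_apply_ne' hij) h

lemma KPset_smul (K : Type) [Field K] {n : ℕ} (P : PosetOn n)
    {a : Matrix (Fin n) (Fin n) K} (c : K) (ha : a ∈ KPset K P) :
    c • a ∈ KPset K P := fun j i h =>
  ha j i fun h0 => h (by simp [Matrix.smul_apply, h0])

lemma KPset_add (K : Type) [Field K] {n : ℕ} (P : PosetOn n)
    {a b : Matrix (Fin n) (Fin n) K} (ha : a ∈ KPset K P) (hb : b ∈ KPset K P) :
    a + b ∈ KPset K P := by
  intro j i h
  by_cases h1 : a j i ≠ 0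
  · exact ha j i h1
  · push_neg at h1
    exact hb j i fun h0 => h (by simp [Matrix.add_apply, h0, h1])

/-- `K¹𝒫` is a unital `K`-subalgebra of `K𝒫`; `K₀¹𝒫` is a `K`-subspace with
`K𝒫 · K₀¹𝒫 ⊆ K₀¹𝒫` and `K₀¹𝒫 · K¹𝒫 ⊆ K₀¹𝒫`; and `K¹𝒫 = K·Id_n ⊕ K₀¹𝒫` internally. -/
theorem stmt0 (K : Type) [Field K] (n : ℕ) (hn : 1 ≤ n) (P : PosetOn n) :
    (∃ S : Subalgebra K (Matrix (Fin n) (Fin n) K), (S : Set (Matrix (Fin n) (Fin n) K)) = KPoneSet K P) ∧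
    KPoneSet K P ⊆ KPset K P ∧
    (∃ W : Submodule K (Matrix (Fin n) (Fin n) K), (W : Set (Matrix (Fin n) (Fin n) K)) = KP0Set K P) ∧
    (∀ a ∈ KPset K P, ∀ b ∈ KP0Set K P, a * b ∈ KP0Set K P) ∧
    (∀ b ∈ KP0Set K P, ∀ a ∈ KPoneSet K P, b * a ∈ KP0Set K P) ∧
    (∀ M ∈ KPoneSet K P, ∃! p : K × Matrix (Fin n) (Fin n) K,
      p.2 ∈ KP0Set K P ∧ M = p.1 • (1 : Matrix (Fin n) (Fin n) K) + p.2) := by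
  haveI : NeZero n := ⟨by omega⟩
  refine ⟨?_, fun M hM => hM.1, ?_, ?_, ?_, ?_⟩
  · refine ⟨{ carrier := KPoneSet K P
              mul_mem' := ?_
              one_mem' := ?_
              add_mem' := ?_
              zero_mem' := ?_
              algebraMap_mem' := ?_ }, rfl⟩
    · rintro a b ⟨ha, c, hc⟩ ⟨hb, d, hd⟩
      refine ⟨KPset_mul K P ha hb, c * d, ?_⟩
      rw [← Matrix.mulVec_mulVec, hd]
      have : (fun _ : Fin n => d) = d • (fun _ : Fin n => (1:K)) := by funext; simp
      rw [this, Matrix.mulVec_smul, hc]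
      funext; simp [mul_comm]
    · exact ⟨KPset_one K P, 1, by simp [Matrix.one_mulVec]⟩
    · rintro a b ⟨ha, c, hc⟩ ⟨hb, d, hd⟩
      exact ⟨KPset_add K P ha hb, c + d, by rw [Matrix.add_mulVec, hc, hd]; rfl⟩
    · exact ⟨fun j i h => absurd rfl h, 0, by simp [Matrix.zero_mulVec]; rfl⟩
    · intro r
      refine ⟨?_, r, ?_⟩
      · have : (algebraMap K (Matrix (Fin n) (Fin n) K)) r = r • 1 := by
          rw [Algebra.algebraMap_eq_smul_one]
        rw [this]
        exact KPset_smul K P r (KPset_one K P)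
      · rw [Algebra.algebraMap_eq_smul_one, Matrix.smul_mulVec, Matrix.one_mulVec]
        funext; simp
  · refine ⟨{ carrier := KP0Set K P
              add_mem' := ?_
              zero_mem' := ?_
              smul_mem' := ?_ }, rfl⟩
    · rintro a b ⟨ha, hc⟩ ⟨hb, hd⟩
      exact ⟨KPset_add K P ha hb, by rw [Matrix.add_mulVec, hc, hd, add_zero]⟩
    · exact ⟨fun j i h => absurd rfl h, by simp [Matrix.zero_mulVec]⟩
    · rintro c a ⟨ha, h0⟩
      exact ⟨KPset_smul K P c ha, by rw [Matrix.smul_mulVec, h0, smul_zero]⟩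
  · rintro a ha b ⟨hb, h0⟩
    exact ⟨KPset_mul K P ha hb, by rw [← Matrix.mulVec_mulVec, h0, Matrix.mulVec_zero]⟩
  · rintro b ⟨hb, h0⟩ a ⟨ha, c, hc⟩
    refine ⟨KPset_mul K P hb ha, ?_⟩
    rw [← Matrix.mulVec_mulVec, hc]
    have : (fun _ : Fin n => c) = c • (fun _ : Fin n => (1:K)) := by funext; simp
    rw [this, Matrix.mulVec_smul, h0, smul_zero]
  · rintro M ⟨hM, c, hc⟩
    refine ⟨(c, M - c • 1), ⟨⟨?_, ?_⟩, by module⟩, ?_⟩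
    · intro j i h
      by_cases hij : i = j
      · exact hij ▸ P.le_refl i
      · refine hM j i fun h0 => h ?_
        simp [Matrix.sub_apply, h0, Matrix.smul_apply, Matrix.one_apply_ne' hij]
    · rw [Matrix.sub_mulVec, hc, Matrix.smul_mulVec, Matrix.one_mulVec]
      funext i; simp
    · rintro ⟨d, N⟩ ⟨⟨hN, hN0⟩, hMeq⟩
      have hd : d = c := by
        have := congrFun hc ⟨0, by omega⟩
        rw [hMeq, Matrix.add_mulVec, hN0, Matrix.smul_mulVec, Matrix.one_mulVec] at this
        simpa using this
      subst hd
      have : N = M - d • 1 := by rw [hMeq]; abel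
      simp [this]
end

section
/- The set {E_{jj} − E_{ji} : i ≺ j in 𝒫} is a K-basis of the row-centralized subspace K₀¹𝒫; consequently dim_K K₀¹𝒫 equals the number of pairs (i,j) with i ≺ j in 𝒫, and dim_K K¹𝒫 = 1 + |{(i,j) : i ≺ j in 𝒫}|. -/
open Matrix

/-- The strict order `i ≺ j`. -/
def PosetOn.lt {n : ℕ} (P : PosetOn n) (i j : Fin n) : Prop := P.le i j ∧ i ≠ j

/-- The family `E_{jj} - E_{ji}` indexed by pairs `i ≺ j` of `𝒫`. -/
def Bfam (K : Type) [Field K] {n : ℕ} (P : PosetOn n)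
    (p : {q : Fin n × Fin n // P.lt q.1 q.2}) : Matrix (Fin n) (Fin n) K :=
  Matrix.single p.1.2 p.1.2 1 - Matrix.single p.1.2 p.1.1 1

/-!
The coefficient of `E_{jj} - E_{ji}` in a linear combination is minus its `(j, i)` entry, which
gives linear independence. Conversely, a matrix `M` with vanishing row sums equals
`∑ M_{ji} (E_{ji} - E_{jj})`, where only the pairs `i ≺ j` contribute. Finally, if `M 𝟙 = c 𝟙`
then `M - c • 1 ∈ K₀¹𝒫`, while `1` has nonzero row sums, so `K¹𝒫 = K₀¹𝒫 ⊕ K • 1`.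
-/

section RowBalanced

variable (K : Type) [Field K]

def rowSumₗ (n : ℕ) : Matrix (Fin n) (Fin n) K →ₗ[K] Fin n → K :=
  (Matrix.mulVecBilin K K).flip fun _ => 1

variable {n : ℕ} (P : PosetOn n)

lemma rowSumₗ_apply (M : Matrix (Fin n) (Fin n) K) : rowSumₗ K n M = M *ᵥ fun _ => 1 := rfl

lemma mem_KPset_iff {M : Matrix (Fin n) (Fin n) K} :
    M ∈ KPset K P ↔ ∀ j i, ¬P.le i j → M j i = 0 :=
  forall₂_congr fun _ _ => not_imp_comm

def incidenceSubmodule : Submodule K (Matrix (Fin n) (Fin n) K) where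
  carrier := KPset K P
  add_mem' {A B} hA hB := by
    rw [mem_KPset_iff] at *
    intro j i hji
    simp [hA j i hji, hB j i hji]
  zero_mem' _ _ h := absurd rfl h
  smul_mem' c A hA j i h := hA j i (right_ne_zero_of_mul h)

def rowCentralizedSubmodule : Submodule K (Matrix (Fin n) (Fin n) K) :=
  incidenceSubmodule K P ⊓ LinearMap.ker (rowSumₗ K n)

def rowBalancedSubmodule : Submodule K (Matrix (Fin n) (Fin n) K) :=
  incidenceSubmodule K P ⊓ (K ∙ (fun _ => 1 : Fin n → K)).comap (rowSumₗ K n)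

lemma coe_rowCentralizedSubmodule :
    (rowCentralizedSubmodule K P : Set (Matrix (Fin n) (Fin n) K)) = KP0Set K P := rfl

lemma coe_rowBalancedSubmodule :
    (rowBalancedSubmodule K P : Set (Matrix (Fin n) (Fin n) K)) = KPoneSet K P := by
  ext M
  simp only [rowBalancedSubmodule, SetLike.mem_coe, Submodule.mem_inf, Submodule.mem_comap,
    Submodule.mem_span_singleton, rowSumₗ_apply, KPoneSet]
  refine and_congr Iff.rfl (exists_congr fun c => ?_)
  rw [eq_comm, funext_iff, funext_iff]
  simp

lemma single_mem_incidenceSubmodule {i j : Fin n} (h : P.le i j) (c : K) :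
    single j i c ∈ incidenceSubmodule K P := by
  intro a b hab
  obtain ⟨rfl, rfl⟩ : j = a ∧ i = b := by
    by_contra hne
    simp [hne] at hab
  exact h

lemma one_mem_incidenceSubmodule : (1 : Matrix (Fin n) (Fin n) K) ∈ incidenceSubmodule K P := by
  intro a b hab
  obtain rfl : a = b := by
    by_contra hne
    simp [one_apply_ne hne] at hab
  exact P.le_refl a

lemma rowSumₗ_single (i j : Fin n) (c : K) : rowSumₗ K n (single j i c) = Pi.single j c := by
  ext
  simp [rowSumₗ_apply, single_mulVec_eq, Pi.single_apply]

lemma Bfam_mem_rowCentralizedSubmodule (q : {q : Fin n × Fin n // P.lt q.1 q.2}) :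
    Bfam K P q ∈ rowCentralizedSubmodule K P :=
  ⟨sub_mem (single_mem_incidenceSubmodule K P (P.le_refl _) 1)
      (single_mem_incidenceSubmodule K P q.2.1 1),
    by rw [SetLike.mem_coe, LinearMap.mem_ker, Bfam, map_sub, rowSumₗ_single, rowSumₗ_single,
      sub_self]⟩

lemma Bfam_apply_swap (p q : {q : Fin n × Fin n // P.lt q.1 q.2}) :
    Bfam K P p q.1.2 q.1.1 = -if p = q then 1 else 0 := by
  have hq : q.1.2 ≠ q.1.1 := fun h => q.2.2 h.symm
  by_cases hpq : p = q
  · subst hpq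
    simp [Bfam, hq]
  · have : ¬(p.1.2 = q.1.2 ∧ p.1.1 = q.1.1) := fun h =>
      hpq (Subtype.ext (Prod.ext h.2 h.1))
    rw [Bfam, Matrix.sub_apply, single_apply, single_apply, if_neg this,
      if_neg fun h => hq (h.1.symm.trans h.2), if_neg hpq, sub_zero, neg_zero]

lemma linearIndependent_Bfam : LinearIndependent K (Bfam K P) := by
  classical
  let L : Matrix (Fin n) (Fin n) K →ₗ[K] {q : Fin n × Fin n // P.lt q.1 q.2} → K :=
    -LinearMap.pi fun q => entryLinearMap K K q.1.2 q.1.1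
  have hL : L ∘ Bfam K P = fun q => Pi.single q 1 := by
    funext p q
    simp [L, Bfam_apply_swap, Pi.single_apply, eq_comm]
  exact .of_comp L (hL ▸ Pi.linearIndependent_single_one _ K)

lemma mem_span_Bfam {M : Matrix (Fin n) (Fin n) K} (hM : M ∈ rowCentralizedSubmodule K P) :
    M ∈ Submodule.span K (Set.range (Bfam K P)) := by
  obtain ⟨hinc, hrow⟩ := hM
  have hrow' : ∀ j, ∑ i, M j i = 0 := fun j => by
    simpa [rowSumₗ_apply, mulVec, dotProduct] using congrFun hrow j
  have hdecomp : M = ∑ j, ∑ i, M j i • (single j i 1 - single j j 1) := by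
    conv_lhs => rw [matrix_eq_sum_single M]
    refine Finset.sum_congr rfl fun j _ => ?_
    simp only [smul_sub, Finset.sum_sub_distrib, ← Finset.sum_smul, hrow' j, zero_smul, sub_zero]
    simp [smul_single]
  rw [hdecomp]
  refine Submodule.sum_mem _ fun j _ => Submodule.sum_mem _ fun i _ => ?_
  by_cases hij : P.lt i j
  · have : single j i (1 : K) - single j j 1 = -Bfam K P ⟨(i, j), hij⟩ := by simp [Bfam]
    rw [this, smul_neg]
    exact neg_mem (Submodule.smul_mem _ _ (Submodule.subset_span ⟨_, rfl⟩))
  · rcases eq_or_ne i j with rfl | hne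
    · simp
    · rw [(mem_KPset_iff K P).1 hinc j i fun h => hij ⟨h, hne⟩, zero_smul]
      exact zero_mem _

lemma span_Bfam_eq : Submodule.span K (Set.range (Bfam K P)) = rowCentralizedSubmodule K P :=
  le_antisymm
    (Submodule.span_le.2 (Set.range_subset_iff.2 (Bfam_mem_rowCentralizedSubmodule K P)))
    fun _ => mem_span_Bfam K P

lemma finrank_span_Bfam :
    Module.finrank K (Submodule.span K (Set.range (Bfam K P))) =
      Nat.card {q : Fin n × Fin n // P.lt q.1 q.2} := by
  have := Fintype.ofFinite {q : Fin n × Fin n // P.lt q.1 q.2}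
  rw [finrank_span_eq_card (linearIndependent_Bfam K P), Nat.card_eq_fintype_card]

lemma rowSumₗ_one : rowSumₗ K n 1 = fun _ => 1 := by
  rw [rowSumₗ_apply, one_mulVec]

lemma rowBalancedSubmodule_eq_sup :
    rowBalancedSubmodule K P = rowCentralizedSubmodule K P ⊔ K ∙ 1 := by
  refine le_antisymm ?_ (sup_le ?_ ?_)
  · rintro M ⟨hinc, hrow⟩
    obtain ⟨c, hc⟩ := Submodule.mem_span_singleton.1 hrow
    have hcentral : M - c • 1 ∈ rowCentralizedSubmodule K P :=
      ⟨sub_mem hinc (Submodule.smul_mem _ c (one_mem_incidenceSubmodule K P)),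
        by rw [SetLike.mem_coe, LinearMap.mem_ker, map_sub, map_smul, rowSumₗ_one, hc,
          sub_self]⟩
    rw [← sub_add_cancel M (c • 1)]
    exact Submodule.add_mem_sup hcentral
      (Submodule.smul_mem _ c (Submodule.mem_span_singleton_self 1))
  · exact inf_le_inf_left _ (Submodule.comap_mono bot_le)
  · rw [Submodule.span_singleton_le_iff_mem]
    exact ⟨one_mem_incidenceSubmodule K P,
      by rw [SetLike.mem_coe, Submodule.mem_comap, rowSumₗ_one]
         exact Submodule.mem_span_singleton_self _⟩

lemma disjoint_rowCentralizedSubmodule_span_one [NeZero n] :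
    Disjoint (rowCentralizedSubmodule K P) (K ∙ 1) := by
  rw [Submodule.disjoint_def]
  rintro _ ⟨_, hrow⟩ hone
  obtain ⟨c, rfl⟩ := Submodule.mem_span_singleton.1 hone
  have hc := congrFun hrow 0
  rw [map_smul, rowSumₗ_one] at hc
  simp_all

lemma finrank_rowBalancedSubmodule [NeZero n] :
    Module.finrank K (rowBalancedSubmodule K P) =
      Module.finrank K (rowCentralizedSubmodule K P) + 1 := by
  have h := Submodule.finrank_sup_add_finrank_inf_eq (rowCentralizedSubmodule K P) (K ∙ 1)
  rw [(disjoint_rowCentralizedSubmodule_span_one K P).eq_bot, finrank_bot, add_zero,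
    finrank_span_singleton one_ne_zero] at h
  rw [rowBalancedSubmodule_eq_sup, h]

end RowBalanced

/-- `{E_{jj} − E_{ji} : i ≺ j}` is a `K`-basis of `K₀¹𝒫`; hence
`dim K₀¹𝒫 = |{(i,j) : i ≺ j}|` and `dim K¹𝒫 = 1 + |{(i,j) : i ≺ j}|`. -/
theorem stmt1 (K : Type) [Field K] (n : ℕ) (hn : 1 ≤ n) (P : PosetOn n) :
    LinearIndependent K (Bfam K P) ∧
    (Submodule.span K (Set.range (Bfam K P)) : Set (Matrix (Fin n) (Fin n) K)) = KP0Set K P ∧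
    Module.finrank K (Submodule.span K (Set.range (Bfam K P))) =
      Nat.card {q : Fin n × Fin n // P.lt q.1 q.2} ∧
    (∃ W : Submodule K (Matrix (Fin n) (Fin n) K),
      (W : Set (Matrix (Fin n) (Fin n) K)) = KPoneSet K P ∧
      Module.finrank K W = 1 + Nat.card {q : Fin n × Fin n // P.lt q.1 q.2}) := by
  have : NeZero n := ⟨by omega⟩
  refine ⟨linearIndependent_Bfam K P, by rw [span_Bfam_eq, coe_rowCentralizedSubmodule],
    finrank_span_Bfam K P, rowBalancedSubmodule K P, coe_rowBalancedSubmodule K P, ?_⟩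
  rw [finrank_rowBalancedSubmodule, ← span_Bfam_eq, finrank_span_Bfam, add_comm]
end

section
/- The set {ε₀} ∪ {ε_j : j ∈ 𝒫'} is a complete set of orthogonal primitive idempotents of K¹𝒫: each of these matrices is a nonzero idempotent element of K¹𝒫, they are pairwise orthogonal, their sum is Id_n, and none of them can be written as a sum of two nonzero orthogonal idempotents of K¹𝒫. -/
open Matrix

/-- `i` is a minimal element of `𝒫`. -/
def PosetOn.IsMin {n : ℕ} (P : PosetOn n) (i : Fin n) : Prop := ∀ j, P.le j i → j = i

/-- A minimal marking of `𝒫`: a function `m : 𝒫 → min(𝒫)` with `m j ⪯ j`. -/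
structure MinimalMarking {n : ℕ} (P : PosetOn n) where
  m : Fin n → Fin n
  isMin : ∀ j, P.IsMin (m j)
  le : ∀ j, P.le (m j) j

/-- `ε_j := E_{jj} − E_{j m(j)}`. -/
def epsMat (K : Type) [Field K] {n : ℕ} (P : PosetOn n) (mk : MinimalMarking P) (j : Fin n) :
    Matrix (Fin n) (Fin n) K :=
  single j j 1 - single j (mk.m j) 1

/-- `ε₀ := Id_n − Σ_{j ∈ 𝒫'} ε_j`. -/
noncomputable def eps0Mat (K : Type) [Field K] {n : ℕ} (P : PosetOn n) (mk : MinimalMarking P) :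
    Matrix (Fin n) (Fin n) K :=
  letI := Classical.decPred fun j : Fin n => P.IsMin j
  1 - ∑ j ∈ Finset.univ.filter (fun j : Fin n => ¬ P.IsMin j), epsMat K P mk j

/-- The set `{ε₀} ∪ {ε_j : j ∈ 𝒫'}`. -/
def idemSet (K : Type) [Field K] {n : ℕ} (P : PosetOn n) (mk : MinimalMarking P) :
    Set (Matrix (Fin n) (Fin n) K) :=
  insert (eps0Mat K P mk) {M | ∃ j, ¬ P.IsMin j ∧ M = epsMat K P mk j}

/-! The matrix `ε₀` has, in row `i`, a single `1` in column `m(i)`, so `ε₀ * M` replaces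
every row `i` of `M` by its row `m(i)`. For `M ∈ K¹𝒫` with row sum `c`, the row of a minimal
element `p` is `c` times the unit vector at `p`, hence `ε₀ * M = c • ε₀`; for non-minimal `j`
the entry `M (m j) j` vanishes, hence `ε_j * M * ε_j = M j j • ε_j`. So each of these
idempotents `e` has the one-dimensional corner `e K¹𝒫 e = K e`, and such an idempotent cannot
split as `f + g` into orthogonal idempotents `f, g ≠ 0`: these would be `a • e` and `b • e`
with `a * b = 0`. -/

theorem eq_zero_or_eq_zero_of_orthogonal_of_corner_scalar {K A : Type*} [Field K] [Ring A]
    [Algebra K A] {e f g : A} (hf : IsIdempotentElem f) (hg : IsIdempotentElem g) (hfg : f * g = 0)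
    (hgf : g * f = 0) (hsum : f + g = e) (hfc : ∃ a : K, e * f * e = a • e)
    (hgc : ∃ b : K, e * g * e = b • e) : f = 0 ∨ g = 0 := by
  obtain ⟨a, ha⟩ := hfc
  obtain ⟨b, hb⟩ := hgc
  have hee : e * e = e := by
    rw [← hsum]; simp only [add_mul, mul_add, hf.eq, hg.eq, hfg, hgf, add_zero, zero_add]
  have hfe : e * f * e = f := by
    rw [← hsum]; simp only [add_mul, mul_add, hf.eq, hfg, hgf, add_zero]
  have hge : e * g * e = g := by
    rw [← hsum]; simp only [add_mul, mul_add, hg.eq, hfg, hgf, zero_add]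
  rw [hfe] at ha
  rw [hge] at hb
  have hab : (a * b) • e = 0 := by
    rw [← hee, ← smul_mul_smul_comm, ← ha, ← hb, hfg]
  rcases smul_eq_zero.mp hab with h | h
  · rcases mul_eq_zero.mp h with rfl | rfl
    · exact .inl (by rw [ha, zero_smul])
    · exact .inr (by rw [hb, zero_smul])
  · exact .inl (by rw [ha, h, smul_zero])

section IncidenceIdempotents

variable {K : Type} [Field K] {n : ℕ} {P : PosetOn n} {mk : MinimalMarking P}

namespace MinimalMarking

theorem m_eq_of_isMin (mk : MinimalMarking P) {i : Fin n} (h : P.IsMin i) : mk.m i = i :=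
  h (mk.m i) (mk.le i)

theorem m_ne_of_not_isMin (mk : MinimalMarking P) {j : Fin n} (hj : ¬ P.IsMin j) (i : Fin n) :
    mk.m i ≠ j :=
  fun h => hj (h ▸ mk.isMin i)

end MinimalMarking

theorem epsMat_apply (j i k : Fin n) :
    epsMat K P mk j i k =
      if i = j then (if k = j then 1 else 0) - (if k = mk.m j then 1 else 0) else 0 := by
  by_cases h : i = j
  · subst h; simp [epsMat, Matrix.single_apply, eq_comm]
  · simp [epsMat, Ne.symm h, h]

theorem eps0Mat_apply (i k : Fin n) :
    eps0Mat K P mk i k = if k = mk.m i then 1 else 0 := by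
  classical
  simp only [eps0Mat, Matrix.sub_apply, Matrix.sum_apply, Matrix.one_apply, epsMat_apply]
  rw [Finset.sum_ite_eq (Finset.univ.filter fun j : Fin n => ¬ P.IsMin j) i]
  by_cases hi : P.IsMin i
  · simp [hi, mk.m_eq_of_isMin hi, eq_comm]
  · have hne := mk.m_ne_of_not_isMin hi i
    by_cases hk : k = i <;> by_cases hk' : k = mk.m i <;> simp_all [eq_comm]

theorem eps0Mat_mul_apply (A : Matrix (Fin n) (Fin n) K) (i k : Fin n) :
    (eps0Mat K P mk * A) i k = A (mk.m i) k := by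
  simp [Matrix.mul_apply, eps0Mat_apply]

theorem epsMat_mul_apply (A : Matrix (Fin n) (Fin n) K) (j i k : Fin n) :
    (epsMat K P mk j * A) i k = if i = j then A j k - A (mk.m j) k else 0 := by
  by_cases h : i = j
  · simp [Matrix.mul_apply, epsMat_apply, h, sub_mul, Finset.sum_sub_distrib]
  · simp [Matrix.mul_apply, epsMat_apply, h]

theorem mul_epsMat_apply (A : Matrix (Fin n) (Fin n) K) (j i k : Fin n) :
    (A * epsMat K P mk j) i k =
      A i j * ((if k = j then 1 else 0) - (if k = mk.m j then 1 else 0)) := by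
  simp [Matrix.mul_apply, epsMat_apply]

theorem KPset.apply_eq_zero_of_isMin {M : Matrix (Fin n) (Fin n) K} (hM : M ∈ KPset K P)
    {p k : Fin n} (hp : P.IsMin p) (hk : k ≠ p) : M p k = 0 := by
  by_contra h
  exact hk (hp k (hM p k h))

theorem KPset.apply_diag_eq_of_isMin {M : Matrix (Fin n) (Fin n) K} (hM : M ∈ KPset K P) {c : K}
    (hc : M *ᵥ (fun _ => 1) = fun _ => c) {p : Fin n} (hp : P.IsMin p) : M p p = c := by
  rw [← congrFun hc p, Matrix.mulVec, dotProduct, Finset.sum_eq_single p]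
  · exact (mul_one _).symm
  · exact fun k _ hk => by rw [KPset.apply_eq_zero_of_isMin hM hp hk, zero_mul]
  · simp

theorem eps0Mat_mul_eq_smul {M : Matrix (Fin n) (Fin n) K} (hM : M ∈ KPset K P) {c : K}
    (hc : M *ᵥ (fun _ => 1) = fun _ => c) : eps0Mat K P mk * M = c • eps0Mat K P mk := by
  ext i k
  rw [eps0Mat_mul_apply, Matrix.smul_apply, eps0Mat_apply, smul_eq_mul]
  by_cases hk : k = mk.m i
  · rw [if_pos hk, hk, KPset.apply_diag_eq_of_isMin hM hc (mk.isMin i), mul_one]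
  · rw [if_neg hk, KPset.apply_eq_zero_of_isMin hM (mk.isMin i) hk, mul_zero]

theorem epsMat_mul_mul_epsMat {M : Matrix (Fin n) (Fin n) K} (hM : M ∈ KPset K P) {j : Fin n}
    (hj : ¬ P.IsMin j) : epsMat K P mk j * M * epsMat K P mk j = M j j • epsMat K P mk j := by
  have hMj : M (mk.m j) j = 0 :=
    KPset.apply_eq_zero_of_isMin hM (mk.isMin j) (mk.m_ne_of_not_isMin hj j).symm
  ext i k
  rw [mul_epsMat_apply, epsMat_mul_apply, Matrix.smul_apply, epsMat_apply, smul_eq_mul, hMj,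
    sub_zero]
  by_cases h : i = j <;> simp [h]

theorem one_mem_KPset : (1 : Matrix (Fin n) (Fin n) K) ∈ KPset K P := by
  intro j i h
  by_cases hji : j = i
  · exact hji ▸ P.le_refl j
  · exact absurd (Matrix.one_apply_ne hji) h

theorem eps0Mat_mem_KPset : eps0Mat K P mk ∈ KPset K P := by
  intro i k h
  rw [eps0Mat_apply] at h
  by_cases hk : k = mk.m i
  · exact hk ▸ mk.le i
  · exact absurd (if_neg hk) h

theorem eps0Mat_mulVec_one : eps0Mat K P mk *ᵥ (fun _ => 1) = fun _ => 1 := by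
  ext i
  simp [Matrix.mulVec, dotProduct, eps0Mat_apply]

theorem eps0Mat_mem_KPoneSet : eps0Mat K P mk ∈ KPoneSet K P :=
  ⟨eps0Mat_mem_KPset, 1, eps0Mat_mulVec_one⟩

theorem epsMat_mem_KPoneSet (j : Fin n) : epsMat K P mk j ∈ KPoneSet K P := by
  refine ⟨fun i k h => ?_, 0, funext fun i => ?_⟩
  · rw [epsMat_apply] at h
    by_cases hi : i = j
    · subst hi
      by_cases hk : k = i
      · exact hk ▸ P.le_refl i
      by_cases hk' : k = mk.m i
      · exact hk' ▸ mk.le i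
      simp [hk, hk'] at h
    · exact absurd (if_neg hi) h
  · by_cases hi : i = j <;>
      simp [Matrix.mulVec, dotProduct, epsMat_apply, hi, Finset.sum_sub_distrib]

theorem epsMat_apply_self {j : Fin n} (hj : ¬ P.IsMin j) : epsMat K P mk j j j = 1 := by
  simp [epsMat_apply, (mk.m_ne_of_not_isMin hj j).symm]

theorem epsMat_ne_zero {j : Fin n} (hj : ¬ P.IsMin j) : epsMat K P mk j ≠ 0 := fun h => by
  simpa [h] using epsMat_apply_self (mk := mk) (K := K) hj

theorem eps0Mat_ne_zero (hn : 1 ≤ n) : eps0Mat K P mk ≠ (0 : Matrix (Fin n) (Fin n) K) :=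
  fun h => by simpa [eps0Mat_apply] using congrFun (congrFun h ⟨0, hn⟩) (mk.m ⟨0, hn⟩)

theorem isIdempotentElem_epsMat {j : Fin n} (hj : ¬ P.IsMin j) :
    IsIdempotentElem (epsMat K P mk j) := by
  have h := epsMat_mul_mul_epsMat (mk := mk) (one_mem_KPset (K := K)) hj
  rwa [mul_one, Matrix.one_apply_eq, one_smul] at h

theorem isIdempotentElem_eps0Mat : IsIdempotentElem (eps0Mat K P mk) := by
  rw [IsIdempotentElem, eps0Mat_mul_eq_smul eps0Mat_mem_KPset eps0Mat_mulVec_one, one_smul]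

theorem eps0Mat_mul_epsMat {j : Fin n} (hj : ¬ P.IsMin j) :
    eps0Mat K P mk * epsMat K P mk j = 0 := by
  ext i k
  simp [eps0Mat_mul_apply, epsMat_apply, mk.m_ne_of_not_isMin hj i]

theorem epsMat_mul_eps0Mat (j : Fin n) : epsMat K P mk j * eps0Mat K P mk = 0 := by
  ext i k
  simp [epsMat_mul_apply, eps0Mat_apply, mk.m_eq_of_isMin (mk.isMin j)]

theorem epsMat_mul_epsMat_of_ne {j j' : Fin n} (hj' : ¬ P.IsMin j') (hne : j ≠ j') :
    epsMat K P mk j * epsMat K P mk j' = 0 := by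
  ext i k
  simp [epsMat_mul_apply, epsMat_apply, hne, mk.m_ne_of_not_isMin hj' j]

theorem epsMat_ne_eps0Mat {j : Fin n} (hj : ¬ P.IsMin j) : epsMat K P mk j ≠ eps0Mat K P mk :=
  fun h => by
    simpa [h, eps0Mat_apply, (mk.m_ne_of_not_isMin hj j).symm] using
      epsMat_apply_self (mk := mk) (K := K) hj

theorem eq_of_epsMat_eq {j j' : Fin n} (hj : ¬ P.IsMin j)
    (h : epsMat K P mk j = epsMat K P mk j') : j = j' := by
  by_contra hne
  have h1 := epsMat_apply_self (mk := mk) (K := K) hj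
  rw [h, epsMat_apply, if_neg hne] at h1
  exact zero_ne_one h1

theorem exists_mul_mul_eq_smul_of_mem_idemSet {e M : Matrix (Fin n) (Fin n) K}
    (he : e ∈ idemSet K P mk) (hM : M ∈ KPoneSet K P) : ∃ c : K, e * M * e = c • e := by
  rcases he with rfl | ⟨j, hj, rfl⟩
  · obtain ⟨hKP, c, hc⟩ := hM
    exact ⟨c, by rw [eps0Mat_mul_eq_smul hKP hc, smul_mul_assoc, isIdempotentElem_eps0Mat.eq]⟩
  · exact ⟨M j j, epsMat_mul_mul_epsMat hM.1 hj⟩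

end IncidenceIdempotents

/-- `{ε₀} ∪ {ε_j : j ∈ 𝒫'}` is a complete set of orthogonal primitive idempotents of `K¹𝒫`. -/
theorem stmt2 (K : Type) [Field K] (n : ℕ) (hn : 1 ≤ n) (P : PosetOn n)
    (mk : MinimalMarking P) :
    letI := Classical.decPred fun j : Fin n => P.IsMin j
    -- each element is a nonzero idempotent of `K¹𝒫`
    (∀ e ∈ idemSet K P mk, e ∈ KPoneSet K P ∧ e ≠ 0 ∧ e * e = e) ∧
    -- the elements are pairwise distinct
    (∀ j, ¬ P.IsMin j → epsMat K P mk j ≠ eps0Mat K P mk) ∧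
    (∀ j j', ¬ P.IsMin j → ¬ P.IsMin j' → epsMat K P mk j = epsMat K P mk j' → j = j') ∧
    -- pairwise orthogonality
    (∀ j, ¬ P.IsMin j → eps0Mat K P mk * epsMat K P mk j = 0 ∧
      epsMat K P mk j * eps0Mat K P mk = 0) ∧
    (∀ j j', ¬ P.IsMin j → ¬ P.IsMin j' → j ≠ j' →
      epsMat K P mk j * epsMat K P mk j' = 0) ∧
    -- the sum is the identity matrix
    (eps0Mat K P mk + ∑ j ∈ Finset.univ.filter (fun j : Fin n => ¬ P.IsMin j), epsMat K P mk j
      = (1 : Matrix (Fin n) (Fin n) K)) ∧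
    -- primitivity: no element is a sum of two nonzero orthogonal idempotents of `K¹𝒫`
    (∀ e ∈ idemSet K P mk, ¬ ∃ f g : Matrix (Fin n) (Fin n) K,
      f ∈ KPoneSet K P ∧ g ∈ KPoneSet K P ∧ f ≠ 0 ∧ g ≠ 0 ∧
      f * f = f ∧ g * g = g ∧ f * g = 0 ∧ g * f = 0 ∧ e = f + g) := by
  refine ⟨?_, fun j hj => epsMat_ne_eps0Mat hj, fun j j' hj _ h => eq_of_epsMat_eq hj h,
    fun j hj => ⟨eps0Mat_mul_epsMat hj, epsMat_mul_eps0Mat j⟩,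
    fun j j' _ hj' hne => epsMat_mul_epsMat_of_ne hj' hne, sub_add_cancel _ _, ?_⟩
  · rintro e (rfl | ⟨j, hj, rfl⟩)
    · exact ⟨eps0Mat_mem_KPoneSet, eps0Mat_ne_zero hn, isIdempotentElem_eps0Mat⟩
    · exact ⟨epsMat_mem_KPoneSet j, epsMat_ne_zero hj, isIdempotentElem_epsMat hj⟩
  · rintro e he ⟨f, g, hf, hg, hf0, hg0, hff, hgg, hfg, hgf, rfl⟩
    rcases eq_zero_or_eq_zero_of_orthogonal_of_corner_scalar hff hgg hfg hgf rfl
      (exists_mul_mul_eq_smul_of_mem_idemSet he hf)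
      (exists_mul_mul_eq_smul_of_mem_idemSet he hg) with h | h
    exacts [hf0 h, hg0 h]
end

section
/- The set L of 2n×2n matrices over K which, written in four n×n blocks (a b; c d), satisfy a, c ∈ K𝒫, b ∈ K₀¹𝒫 and d ∈ K¹𝒫, is a unital K-subalgebra of Mat_{2n}(K), and dim_K L = 1 + 2n + 4·|{(i,j) : i ≺ j in 𝒫}|. -/
open Matrix

/-- The matrix model of the left Burt–Butler algebra: `2n × 2n` matrices (indexed by
`Fin n ⊕ Fin n`) with blocks `(a b; c d)`, `a, c ∈ K𝒫`, `b ∈ K₀¹𝒫`, `d ∈ K¹𝒫`. -/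
def LSet (K : Type) [Field K] {n : ℕ} (P : PosetOn n) :
    Set (Matrix (Fin n ⊕ Fin n) (Fin n ⊕ Fin n) K) :=
  {X | X.toBlocks₁₁ ∈ KPset K P ∧ X.toBlocks₁₂ ∈ KP0Set K P ∧
       X.toBlocks₂₁ ∈ KPset K P ∧ X.toBlocks₂₂ ∈ KPoneSet K P}

/-! Block multiplication shows that `L` is closed under products: `K𝒫` is an algebra,
`K₀¹𝒫` is stable under left multiplication by `K𝒫` and under right multiplication by `K¹𝒫`,
and `K¹𝒫` is closed under products, because `(MN)𝟙 = M(N𝟙)`.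

For the dimension, `K𝒫` has the matrix units `E_{ji}` with `i ⪯ j` as a basis, so it has
dimension `n + #{i ≺ j}`. The row-sum map `M ↦ M𝟙` sends `K𝒫` onto `Kⁿ` (already the diagonal
matrices do), and `K₀¹𝒫`, `K¹𝒫` are the preimages of `0` and of the line `K𝟙`; rank-nullity gives
them dimensions `#{i ≺ j}` and `#{i ≺ j} + 1`. Summing over the four blocks gives the formula. -/

open Module

namespace PosetOn

variable {n : ℕ} (P : PosetOn n)

lemma le_iff_eq_or_lt {i j : Fin n} : P.le i j ↔ i = j ∨ P.lt i j := by
  by_cases h : i = j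
  · subst h; simp [P.le_refl]
  · simp [PosetOn.lt, h]

lemma card_le_eq_add_card_lt : Nat.card {q : Fin n × Fin n // P.le q.1 q.2} =
    n + Nat.card {q : Fin n × Fin n // P.lt q.1 q.2} := by
  classical
  have hdisj : Disjoint (fun q : Fin n × Fin n => q.1 = q.2) (fun q => P.lt q.1 q.2) :=
    Pi.disjoint_iff.mpr fun _ => Prop.disjoint_iff.mpr fun h => h.2.2 h.1
  have hdiag : {q : Fin n × Fin n // q.1 = q.2} ≃ Fin n :=
    { toFun := fun q => q.1.1
      invFun := fun i => ⟨(i, i), rfl⟩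
      left_inv := fun ⟨(i, j), h⟩ => by cases h; rfl
      right_inv := fun _ => rfl }
  rw [Nat.card_congr ((Equiv.subtypeEquivRight fun q => P.le_iff_eq_or_lt).trans
    (subtypeOrEquiv _ _ hdisj)), Nat.card_sum, Nat.card_congr hdiag, Nat.card_eq_fintype_card,
    Fintype.card_fin]

end PosetOn

namespace Submodule

section Blocks

variable {R : Type*} [Semiring R] {l m n o : Type*}

def blocks (A : Submodule R (Matrix n l R)) (B : Submodule R (Matrix n m R))
    (C : Submodule R (Matrix o l R)) (D : Submodule R (Matrix o m R)) :
    Submodule R (Matrix (n ⊕ o) (l ⊕ m) R) where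
  carrier :=
    {X | X.toBlocks₁₁ ∈ A ∧ X.toBlocks₁₂ ∈ B ∧ X.toBlocks₂₁ ∈ C ∧ X.toBlocks₂₂ ∈ D}
  add_mem' hX hY := ⟨A.add_mem hX.1 hY.1, B.add_mem hX.2.1 hY.2.1, C.add_mem hX.2.2.1 hY.2.2.1,
    D.add_mem hX.2.2.2 hY.2.2.2⟩
  zero_mem' := ⟨A.zero_mem, B.zero_mem, C.zero_mem, D.zero_mem⟩
  smul_mem' r _ hX := ⟨A.smul_mem r hX.1, B.smul_mem r hX.2.1, C.smul_mem r hX.2.2.1,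
    D.smul_mem r hX.2.2.2⟩

variable {A : Submodule R (Matrix n l R)} {B : Submodule R (Matrix n m R)}
  {C : Submodule R (Matrix o l R)} {D : Submodule R (Matrix o m R)}

theorem fromBlocks_mem_blocks {a : Matrix n l R} {b : Matrix n m R} {c : Matrix o l R}
    {d : Matrix o m R} :
    Matrix.fromBlocks a b c d ∈ blocks A B C D ↔ a ∈ A ∧ b ∈ B ∧ c ∈ C ∧ d ∈ D := by
  simp [blocks]

variable (A B C D) in
def blocksEquiv : blocks A B C D ≃ₗ[R] A × B × C × D where
  toFun X := (⟨_, X.2.1⟩, ⟨_, X.2.2.1⟩, ⟨_, X.2.2.2.1⟩, ⟨_, X.2.2.2.2⟩)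
  invFun Y := ⟨Matrix.fromBlocks Y.1 Y.2.1 Y.2.2.1 Y.2.2.2,
    fromBlocks_mem_blocks.mpr ⟨Y.1.2, Y.2.1.2, Y.2.2.1.2, Y.2.2.2.2⟩⟩
  left_inv X := Subtype.ext X.1.fromBlocks_toBlocks
  right_inv Y := by simp
  map_add' _ _ := rfl
  map_smul' _ _ := rfl

end Blocks

section Finrank

variable {K V W : Type*} [Field K] [AddCommGroup V] [Module K V] [AddCommGroup W] [Module K W]
  [FiniteDimensional K V] [FiniteDimensional K W]

theorem finrank_comap_add_finrank {f : V →ₗ[K] W} (hf : Function.Surjective f)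
    (U : Submodule K W) :
    finrank K (U.comap f) + finrank K W = finrank K V + finrank K U := by
  have hrange : LinearMap.range (U.mkQ ∘ₗ f) = ⊤ :=
    LinearMap.range_eq_top.mpr (U.mkQ_surjective.comp hf)
  have hker : LinearMap.ker (U.mkQ ∘ₗ f) = U.comap f := by
    rw [LinearMap.ker_comp, ker_mkQ]
  have hrank := LinearMap.finrank_range_add_finrank_ker (U.mkQ ∘ₗ f)
  rw [hrange, hker, finrank_top] at hrank
  have hquot := U.finrank_quotient_add_finrank
  omega

theorem finrank_inf_comap_add_finrank {p : Submodule K V} {f : V →ₗ[K] W}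
    (hf : Function.Surjective (f ∘ₗ p.subtype)) (U : Submodule K W) :
    finrank K ↥(p ⊓ U.comap f) + finrank K W = finrank K p + finrank K U := by
  rw [← map_comap_subtype, finrank_map_subtype_eq, ← comap_comp]
  exact finrank_comap_add_finrank hf U

variable {l m n o : Type*}

theorem finrank_blocks [Fintype l] [Fintype m] [Fintype n] [Fintype o]
    (A : Submodule K (Matrix n l K)) (B : Submodule K (Matrix n m K))
    (C : Submodule K (Matrix o l K)) (D : Submodule K (Matrix o m K)) :
    finrank K (blocks A B C D) = finrank K A + finrank K B + finrank K C + finrank K D := by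
  rw [(blocksEquiv A B C D).finrank_eq, finrank_prod, finrank_prod, finrank_prod]
  omega

end Finrank

end Submodule

section Incidence

variable (K : Type) [Field K] {n : ℕ} (P : PosetOn n)

lemma diagonal_mem_KPset (v : Fin n → K) : diagonal v ∈ KPset K P := by
  intro j i h
  obtain rfl : j = i := by_contra fun hji => h (diagonal_apply_ne v hji)
  exact P.le_refl j

def incidenceAlgebra : Subalgebra K (Matrix (Fin n) (Fin n) K) where
  carrier := KPset K P
  mul_mem' {M N} hM hN j i h := by
    rw [mul_apply] at h
    obtain ⟨k, -, hk⟩ := Finset.exists_ne_zero_of_sum_ne_zero h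
    exact P.le_trans (hN k i (right_ne_zero_of_mul hk)) (hM j k (left_ne_zero_of_mul hk))
  add_mem' {M N} hM hN j i h := by
    by_cases hMji : M j i = 0
    · exact hN j i (by simpa [hMji] using h)
    · exact hM j i hMji
  algebraMap_mem' r := by
    rw [algebraMap_eq_diagonal]
    exact diagonal_mem_KPset K P _

open scoped Classical in
noncomputable def incidenceEquiv :
    (incidenceAlgebra K P).toSubmodule ≃ₗ[K] ({q : Fin n × Fin n // P.le q.1 q.2} → K) where
  toFun M q := M.1 q.1.2 q.1.1
  invFun w := ⟨of fun j i => if h : P.le i j then w ⟨(i, j), h⟩ else 0, fun j i h => by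
    by_contra hij
    exact h (by simp [hij])⟩
  left_inv M := by
    ext j i
    by_cases h : P.le i j
    · simp [h]
    · have hM : (M : Matrix (Fin n) (Fin n) K) ∈ KPset K P := M.2
      simpa [h] using (not_not.mp (mt (hM j i) h)).symm
  right_inv w := by
    ext ⟨⟨i, j⟩, h⟩
    simp [h]
  map_add' _ _ := rfl
  map_smul' _ _ := rfl

open scoped Classical in
lemma finrank_incidenceAlgebra :
    finrank K (incidenceAlgebra K P).toSubmodule =
      n + Nat.card {q : Fin n × Fin n // P.lt q.1 q.2} := by
  rw [(incidenceEquiv K P).finrank_eq, finrank_pi, ← Nat.card_eq_fintype_card,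
    P.card_le_eq_add_card_lt]

end Incidence

section RowSums

variable (K : Type) [Field K] (n : ℕ)

def rowSum : Matrix (Fin n) (Fin n) K →ₗ[K] Fin n → K where
  toFun M := M *ᵥ fun _ => 1
  map_add' M N := add_mulVec M N _
  map_smul' c M := smul_mulVec c M _

variable {K n}

lemma rowSum_mul (M N : Matrix (Fin n) (Fin n) K) : rowSum K n (M * N) = M *ᵥ rowSum K n N :=
  (mulVec_mulVec _ M N).symm

lemma rowSum_mul_mem_span {M N : Matrix (Fin n) (Fin n) K}
    (hN : rowSum K n N ∈ K ∙ fun _ => 1) : rowSum K n (M * N) ∈ K ∙ rowSum K n M := by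
  obtain ⟨c, hc⟩ := Submodule.mem_span_singleton.mp hN
  refine Submodule.mem_span_singleton.mpr ⟨c, ?_⟩
  rw [rowSum_mul, ← hc, mulVec_smul]
  rfl

variable (K) (P : PosetOn n)

def rowCentered : Submodule K (Matrix (Fin n) (Fin n) K) :=
  (incidenceAlgebra K P).toSubmodule ⊓ LinearMap.ker (rowSum K n)

def rowBalanced : Submodule K (Matrix (Fin n) (Fin n) K) :=
  (incidenceAlgebra K P).toSubmodule ⊓ (K ∙ fun _ => 1).comap (rowSum K n)

lemma mem_rowBalanced_iff {M : Matrix (Fin n) (Fin n) K} :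
    M ∈ rowBalanced K P ↔ M ∈ KPoneSet K P := by
  refine and_congr_right fun _ => Submodule.mem_span_singleton.trans ?_
  refine exists_congr fun c => ?_
  rw [eq_comm]
  exact Eq.congr_right (funext fun _ => by simp)

variable {K P}

lemma rowCentered_le_rowBalanced : rowCentered K P ≤ rowBalanced K P :=
  fun _ hM => ⟨hM.1, by simp [LinearMap.mem_ker.mp hM.2]⟩

lemma mul_mem_rowCentered {M N : Matrix (Fin n) (Fin n) K} (hM : M ∈ incidenceAlgebra K P)
    (hN : N ∈ rowCentered K P) : M * N ∈ rowCentered K P :=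
  ⟨(incidenceAlgebra K P).mul_mem hM hN.1, by
    simp [LinearMap.mem_ker, rowSum_mul, LinearMap.mem_ker.mp hN.2]⟩

lemma mul_mem_rowCentered_of_mem_rowBalanced {M N : Matrix (Fin n) (Fin n) K}
    (hM : M ∈ rowCentered K P) (hN : N ∈ rowBalanced K P) : M * N ∈ rowCentered K P := by
  refine ⟨(incidenceAlgebra K P).mul_mem hM.1 hN.1, ?_⟩
  simpa [LinearMap.mem_ker.mp hM.2] using rowSum_mul_mem_span (M := M) hN.2

lemma mul_mem_rowBalanced {M N : Matrix (Fin n) (Fin n) K}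
    (hM : M ∈ rowBalanced K P) (hN : N ∈ rowBalanced K P) : M * N ∈ rowBalanced K P :=
  ⟨(incidenceAlgebra K P).mul_mem hM.1 hN.1, Submodule.mem_comap.mpr <|
    (Submodule.span_singleton_le_iff_mem (rowSum K n M) _).mpr hM.2 (rowSum_mul_mem_span hN.2)⟩

variable (K P)

lemma rowSum_comp_subtype_surjective :
    Function.Surjective (rowSum K n ∘ₗ (incidenceAlgebra K P).toSubmodule.subtype) := by
  classical
  exact fun v => ⟨⟨diagonal v, diagonal_mem_KPset K P v⟩,
    funext fun i => by simp [rowSum, mulVec_diagonal]⟩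

lemma finrank_rowCentered_add :
    finrank K (rowCentered K P) + n = finrank K (incidenceAlgebra K P).toSubmodule := by
  have := Submodule.finrank_inf_comap_add_finrank (rowSum_comp_subtype_surjective K P) ⊥
  rwa [Submodule.comap_bot, finrank_bot, add_zero, finrank_fin_fun] at this

lemma finrank_rowBalanced_add (hn : 0 < n) :
    finrank K (rowBalanced K P) + n = finrank K (incidenceAlgebra K P).toSubmodule + 1 := by
  have hone : (fun _ => 1 : Fin n → K) ≠ 0 := fun h => one_ne_zero (congrFun h ⟨0, hn⟩)
  have := Submodule.finrank_inf_comap_add_finrank (rowSum_comp_subtype_surjective K P)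
    (K ∙ fun _ => 1)
  rwa [finrank_span_singleton hone, finrank_fin_fun] at this

end RowSums

section BurtButler

variable (K : Type) [Field K] {n : ℕ} (P : PosetOn n)

def burtButlerBlocks : Submodule K (Matrix (Fin n ⊕ Fin n) (Fin n ⊕ Fin n) K) :=
  Submodule.blocks (incidenceAlgebra K P).toSubmodule (rowCentered K P)
    (incidenceAlgebra K P).toSubmodule (rowBalanced K P)

lemma one_mem_burtButlerBlocks : 1 ∈ burtButlerBlocks K P := by
  rw [← fromBlocks_one, burtButlerBlocks, Submodule.fromBlocks_mem_blocks]
  refine ⟨(incidenceAlgebra K P).one_mem, zero_mem _, zero_mem _,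
    (incidenceAlgebra K P).one_mem, ?_⟩
  simp [rowSum, Submodule.mem_span_singleton_self]

lemma mul_mem_burtButlerBlocks {X Y : Matrix (Fin n ⊕ Fin n) (Fin n ⊕ Fin n) K}
    (hX : X ∈ burtButlerBlocks K P) (hY : Y ∈ burtButlerBlocks K P) :
    X * Y ∈ burtButlerBlocks K P := by
  obtain ⟨ha, hb, hc, hd⟩ := hX
  obtain ⟨ha', hb', hc', hd'⟩ := hY
  rw [← X.fromBlocks_toBlocks, ← Y.fromBlocks_toBlocks, fromBlocks_multiply, burtButlerBlocks,
    Submodule.fromBlocks_mem_blocks]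
  exact ⟨add_mem ((incidenceAlgebra K P).mul_mem ha ha') ((incidenceAlgebra K P).mul_mem hb.1 hc'),
    add_mem (mul_mem_rowCentered ha hb') (mul_mem_rowCentered_of_mem_rowBalanced hb hd'),
    add_mem ((incidenceAlgebra K P).mul_mem hc ha') ((incidenceAlgebra K P).mul_mem hd.1 hc'),
    add_mem (rowCentered_le_rowBalanced (mul_mem_rowCentered hc hb'))
      (mul_mem_rowBalanced hd hd')⟩

def burtButler : Subalgebra K (Matrix (Fin n ⊕ Fin n) (Fin n ⊕ Fin n) K) :=
  (burtButlerBlocks K P).toSubalgebra (one_mem_burtButlerBlocks K P)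
    fun _ _ => mul_mem_burtButlerBlocks K P

lemma coe_burtButler :
    (burtButler K P : Set (Matrix (Fin n ⊕ Fin n) (Fin n ⊕ Fin n) K)) = LSet K P :=
  Set.ext fun _ =>
    and_congr_right' <| and_congr_right' <| and_congr_right' <| mem_rowBalanced_iff K P

lemma finrank_burtButler :
    finrank K (burtButler K P) = 2 * finrank K (incidenceAlgebra K P).toSubmodule +
      finrank K (rowCentered K P) + finrank K (rowBalanced K P) := by
  change finrank K (burtButlerBlocks K P) = _
  rw [burtButlerBlocks, Submodule.finrank_blocks]
  ring

end BurtButler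

/-- `L` is a unital `K`-subalgebra of `Mat_{2n}(K)` of dimension
`1 + 2n + 4·|{(i,j) : i ≺ j}|`. -/
theorem stmt5 (K : Type) [Field K] (n : ℕ) (hn : 1 ≤ n) (P : PosetOn n) :
    ∃ S : Subalgebra K (Matrix (Fin n ⊕ Fin n) (Fin n ⊕ Fin n) K),
      (S : Set (Matrix (Fin n ⊕ Fin n) (Fin n ⊕ Fin n) K)) = LSet K P ∧
      Module.finrank K S = 1 + 2 * n + 4 * Nat.card {q : Fin n × Fin n // P.lt q.1 q.2} := by
  refine ⟨burtButler K P, coe_burtButler K P, ?_⟩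
  have hC := finrank_rowCentered_add K P
  have hB := finrank_rowBalanced_add K P hn
  rw [finrank_burtButler, finrank_incidenceAlgebra] at *
  omega
end

section
/- For every k ∈ 𝒫, the subspace I₀·D(I_k L) of the left L-module D(I_k L) is contained in the L-submodule generated by I_E·D(I_k L), i.e. I₀·D(I_k L) ⊆ span_K{x·φ : x ∈ L, φ ∈ I_E·D(I_k L)}. -/
/-!
Put `x₀ = (0 0; 1 0) ∈ L`. Then `x₀ I_E = x₀` and `I₀ = x₀ s` with `s = (0 1; 0 0)`, which is
not in `L` (its upper right block has row sums `1`). Still, `u x₀ = 0` forces `u I₀ = 0`, so for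
`ψ ∈ D(I_k L)` the functional `u ↦ ψ (u I₀)` vanishes on the kernel of `u ↦ u x₀` and, over a
field, factors as `u ↦ φ (u x₀) = φ (u x₀ I_E)`. Thus `I₀ ψ = x₀ (I_E φ)`.
-/

open Matrix

set_option synthInstance.maxHeartbeats 1000000
set_option maxHeartbeats 2000000

variable {K : Type} [Field K] {n : ℕ}
variable {L : Subalgebra K (Matrix (Fin n ⊕ Fin n) (Fin n ⊕ Fin n) K)}

/-- The right ideal `I_k L = {u ∈ L : I_k u = u}` as a `K`-subspace of `L`. -/
def cornerRight (Ik : L) : Submodule K L where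
  carrier := {u | Ik * u = u}
  add_mem' := by
    intro a b ha hb
    show Ik * (a + b) = a + b
    rw [mul_add, ha, hb]
  zero_mem' := mul_zero _
  smul_mem' := by
    intro c u hu
    show Ik * (c • u) = c • u
    rw [mul_smul_comm, hu]

/-- Right multiplication by `x ∈ L` on `I_k L`, as a `K`-linear map. -/
def rmulCorner (Ik : L) (x : L) : ↥(cornerRight Ik) →ₗ[K] ↥(cornerRight Ik) where
  toFun u := ⟨u.1 * x, by
    have h : Ik * u.1 = u.1 := u.2
    show Ik * (u.1 * x) = u.1 * x
    rw [← mul_assoc, h]⟩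
  map_add' u v := by
    apply Subtype.ext
    show (u.1 + v.1) * x = u.1 * x + v.1 * x
    rw [add_mul]
  map_smul' c u := by
    apply Subtype.ext
    show (c • u.1) * x = c • (u.1 * x)
    rw [smul_mul_assoc]

/-- The `K`-linear dual `D(I_k L)`, a left `L`-module via `(x·φ)(u) = φ(u x)`. -/
abbrev DualMod (Ik : L) : Type _ := Module.Dual K ↥(cornerRight Ik)

/-- The left `L`-module structure on `D(I_k L)`: `(x·φ)(u) = φ(u x)`. -/
noncomputable instance dualModule (Ik : L) : Module L (DualMod Ik) where
  smul x φ := φ ∘ₗ rmulCorner Ik x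
  one_smul φ := LinearMap.ext fun u => by
    show φ (rmulCorner Ik 1 u) = φ u
    congr 1
    exact Subtype.ext (mul_one _)
  mul_smul x y φ := LinearMap.ext fun u => by
    show φ (rmulCorner Ik (x * y) u) = φ (rmulCorner Ik y (rmulCorner Ik x u))
    congr 1
    exact Subtype.ext (mul_assoc _ _ _).symm
  smul_zero x := rfl
  smul_add x φ ψ := rfl
  add_smul x y φ := LinearMap.ext fun u => by
    show φ (rmulCorner Ik (x + y) u) = φ (rmulCorner Ik x u) + φ (rmulCorner Ik y u)
    rw [← map_add]
    congr 1
    exact Subtype.ext (by show u.1 * (x + y) = u.1 * x + u.1 * y; rw [mul_add])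
  zero_smul φ := LinearMap.ext fun u => by
    show φ (rmulCorner Ik 0 u) = 0
    have h : rmulCorner Ik 0 u = 0 := Subtype.ext (mul_zero _)
    rw [h, map_zero]

section BlockUnits

variable {m R : Type*} [Fintype m] [DecidableEq m] [Semiring R]

theorem fromBlocks_lowerUnit_mul_upperUnit :
    (fromBlocks 0 0 1 0 * fromBlocks 0 1 0 0 : Matrix (m ⊕ m) (m ⊕ m) R)
      = fromBlocks 0 0 0 1 := by
  simp [fromBlocks_multiply]

theorem fromBlocks_lowerUnit_mul_fromBlocks_one :
    (fromBlocks 0 0 1 0 * fromBlocks 1 0 0 0 : Matrix (m ⊕ m) (m ⊕ m) R)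
      = fromBlocks 0 0 1 0 := by
  simp [fromBlocks_multiply]

end BlockUnits

theorem fromBlocks_lowerUnit_mem_LSet (P : PosetOn n) :
    (fromBlocks 0 0 1 0 : Matrix (Fin n ⊕ Fin n) (Fin n ⊕ Fin n) K) ∈ LSet K P := by
  have zero_mem : (0 : Matrix (Fin n) (Fin n) K) ∈ KPset K P := fun _ _ h => absurd rfl h
  refine ⟨by simpa using zero_mem, ⟨by simpa using zero_mem, by simp⟩, ?_,
    ⟨by simpa using zero_mem, 0, by ext; simp⟩⟩
  intro j i h
  obtain rfl : i = j := by by_contra hij; exact h (one_apply_ne' hij)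
  exact P.le_refl i

theorem ker_rmulCorner_le {Ik x y : L} (m : Matrix (Fin n ⊕ Fin n) (Fin n ⊕ Fin n) K)
    (h : (y : Matrix (Fin n ⊕ Fin n) (Fin n ⊕ Fin n) K) = x * m) :
    LinearMap.ker (rmulCorner Ik x) ≤ LinearMap.ker (rmulCorner Ik y) := by
  intro u hu
  have hux : (u : Matrix (Fin n ⊕ Fin n) (Fin n ⊕ Fin n) K) * x = 0 :=
    congrArg (fun v : cornerRight Ik => ((v : L) : Matrix (Fin n ⊕ Fin n) (Fin n ⊕ Fin n) K)) hu
  refine Subtype.ext (Subtype.ext ?_)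
  change (u : Matrix (Fin n ⊕ Fin n) (Fin n ⊕ Fin n) K) * y = 0
  rw [h, ← Matrix.mul_assoc, hux, Matrix.zero_mul]

theorem exists_smul_eq_smul_of_val_eq_mul {Ik x y : L}
    (m : Matrix (Fin n ⊕ Fin n) (Fin n ⊕ Fin n) K)
    (h : (y : Matrix (Fin n ⊕ Fin n) (Fin n ⊕ Fin n) K) = x * m) (ψ : DualMod Ik) :
    ∃ φ : DualMod Ik, y • ψ = x • φ := by
  have hmem : y • ψ ∈ LinearMap.range (rmulCorner Ik x).dualMap := by
    rw [LinearMap.range_dualMap_eq_dualAnnihilator_ker (V₁ := cornerRight Ik)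
      (V₂ := cornerRight Ik), Submodule.mem_dualAnnihilator]
    intro u hu
    change ψ (rmulCorner Ik y u) = 0
    rw [ker_rmulCorner_le m h hu, map_zero]
  obtain ⟨φ, hφ⟩ := hmem
  exact ⟨φ, hφ.symm⟩

theorem stmt11_general (P : PosetOn n)
    (hL : (L : Set (Matrix (Fin n ⊕ Fin n) (Fin n ⊕ Fin n) K)) = LSet K P)
    (Ik IE I0 : L)
    (hIE : (IE : Matrix (Fin n ⊕ Fin n) (Fin n ⊕ Fin n) K) = fromBlocks 1 0 0 0)
    (hI0 : (I0 : Matrix (Fin n ⊕ Fin n) (Fin n ⊕ Fin n) K) = fromBlocks 0 0 0 1) :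
    {χ : DualMod Ik | ∃ ψ : DualMod Ik, χ = I0 • ψ} ⊆
      (Submodule.span K
        {χ : DualMod Ik | ∃ (x : L) (ψ : DualMod Ik), χ = x • (IE • ψ)} :
          Submodule K (DualMod Ik)) := by
  rintro _ ⟨ψ, rfl⟩
  let x₀ : L := ⟨fromBlocks 0 0 1 0, by
    change _ ∈ (L : Set (Matrix (Fin n ⊕ Fin n) (Fin n ⊕ Fin n) K))
    exact hL ▸ fromBlocks_lowerUnit_mem_LSet P⟩
  have hx₀IE : x₀ * IE = x₀ :=
    Subtype.ext (by rw [Subalgebra.coe_mul, hIE]; exact fromBlocks_lowerUnit_mul_fromBlocks_one)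
  obtain ⟨φ, hφ⟩ := exists_smul_eq_smul_of_val_eq_mul (Ik := Ik) (x := x₀) (fromBlocks 0 1 0 0)
    (hI0.trans fromBlocks_lowerUnit_mul_upperUnit.symm) ψ
  refine Submodule.subset_span ⟨x₀, φ, ?_⟩
  rw [hφ, ← mul_smul, hx₀IE]

/-- For each `k ∈ 𝒫`, the subspace `I₀·D(I_k L)` of the left `L`-module `D(I_k L)` is
contained in the `L`-submodule generated by `I_E·D(I_k L)`. -/
theorem stmt11 (hK : IsAlgClosed K) (hn : 1 ≤ n) (P : PosetOn n)
    (hL : (L : Set (Matrix (Fin n ⊕ Fin n) (Fin n ⊕ Fin n) K)) = LSet K P)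
    (k : Fin n) (Ik IE I0 : L)
    (hIk : (Ik : Matrix (Fin n ⊕ Fin n) (Fin n ⊕ Fin n) K)
      = fromBlocks (Matrix.single k k 1) 0 0 0)
    (hIE : (IE : Matrix (Fin n ⊕ Fin n) (Fin n ⊕ Fin n) K) = fromBlocks 1 0 0 0)
    (hI0 : (I0 : Matrix (Fin n ⊕ Fin n) (Fin n ⊕ Fin n) K) = fromBlocks 0 0 0 1) :
    {χ : DualMod Ik | ∃ ψ : DualMod Ik, χ = I0 • ψ} ⊆
      (Submodule.span K
        {χ : DualMod Ik | ∃ (x : L) (ψ : DualMod Ik), χ = x • (IE • ψ)} :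
          Submodule K (DualMod Ik)) :=
  stmt11_general P hL Ik IE I0 hIE hI0
end

section
/- For i, j ∈ 𝒫 ∪ {0}, the space of R-module homomorphisms Hom_R(Δ(j), Δ(i)) has K-dimension 1 if either (i, j ∈ 𝒫 and i ⪯ j in 𝒫) or i = j = 0, and has K-dimension 0 in all other cases. -/
/-!
`Δ(k)` is cyclic, generated by the image of the idempotent `e_k`, so evaluation there identifies
`Hom_R(Re / Rf, N)` with `{x ∈ N | e x = x, f x = 0}` (and `Hom_R(Re, N)` with `eN`). In the
matrix model `e_a r e_b = r_{ab} E_{ab}`, so `e_j Δ(i)` is spanned by the class of `E_{ji}` when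
`i ⪯ j` and vanishes otherwise; that class is nonzero because the upper-right block of `R` is
zero, and `E_{n+1,j} E_{ji} = E_{n+1,i}` kills it. Likewise `e₀ Re₀ = K e₀`, `e₀ Δ(k) = 0`
(as `e₀ R e_k = K E_{n+1,k}`) and `e_k Re₀ = 0`.
-/

open Matrix

set_option synthInstance.maxHeartbeats 1000000
set_option maxHeartbeats 2000000

/-- The matrix model of the right Burt–Butler algebra: `(n+1) × (n+1)` matrices (indexed by
`Fin n ⊕ Unit`) whose upper-left `n × n` block is in `K𝒫` and upper-right block is zero. -/
def RSet (K : Type) [Field K] {n : ℕ} (P : PosetOn n) :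
    Set (Matrix (Fin n ⊕ Unit) (Fin n ⊕ Unit) K) :=
  {X | X.toBlocks₁₁ ∈ KPset K P ∧ X.toBlocks₁₂ = 0}

section GenericModules

variable {K : Type} [Field K] {A : Type} [Ring A] [Algebra K A] (e f : A)

/-- The left ideal `A e = {y ∈ A : y e = y}` (for `e` idempotent), as an `A`-submodule. -/
def leftIdeal (A : Type) [Ring A] (e : A) : Submodule A A where
  carrier := {y | y * e = y}
  add_mem' := by intro a b ha hb; show (a + b) * e = a + b; rw [add_mul, ha, hb]
  zero_mem' := zero_mul e
  smul_mem' := by intro r y hy; show (r • y) * e = r • y; rw [smul_eq_mul, mul_assoc, hy]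

/-- The cyclic submodule of `leftIdeal A e` generated by (elements equal to) `f`. -/
def cycSub (A : Type) [Ring A] (e f : A) : Submodule A ↥(leftIdeal A e) :=
  Submodule.span A {y : ↥(leftIdeal A e) | (y : A) = f}

/-- The quotient `(A e) / (A f)`; for the right Burt–Butler algebra this realizes the
standard modules `Δ(k) = Re_k / K·E_{n+1,k}`. -/
def DeltaGen (A : Type) [Ring A] (e f : A) : Type :=
  ↥(leftIdeal A e) ⧸ cycSub A e f

noncomputable instance : AddCommGroup (DeltaGen A e f) :=
  inferInstanceAs (AddCommGroup (↥(leftIdeal A e) ⧸ cycSub A e f))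

noncomputable instance : Module A (DeltaGen A e f) :=
  inferInstanceAs (Module A (↥(leftIdeal A e) ⧸ cycSub A e f))

noncomputable instance : Module K (DeltaGen A e f) :=
  inferInstanceAs (Module K (↥(leftIdeal A e) ⧸ cycSub A e f))

noncomputable instance : SMulCommClass A K (DeltaGen A e f) :=
  inferInstanceAs (SMulCommClass A K (↥(leftIdeal A e) ⧸ cycSub A e f))

end GenericModules

lemma Submodule.finrank_eq_one_of_le_span_singleton {K V : Type} [DivisionRing K]
    [AddCommGroup V] [Module K V] {S : Submodule K V} {v : V} (hv : v ∈ S) (hv0 : v ≠ 0)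
    (hS : S ≤ K ∙ v) : Module.finrank K S = 1 := by
  rw [le_antisymm hS ((Submodule.span_singleton_le_iff_mem v S).mpr hv)]
  exact finrank_span_singleton hv0

section HomsFromCyclicModules

variable {K A N : Type} [Semiring K] [Ring A]
  [AddCommGroup N] [Module A N] [Module K N] [SMulCommClass A K N]

variable (K N) in
def fixedSubmodule (e : A) : Submodule K N where
  carrier := MulAction.fixedBy N e
  add_mem' {x y} hx hy := by
    rw [MulAction.mem_fixedBy] at *
    rw [smul_add, hx, hy]
  zero_mem' := smul_zero e
  smul_mem' c x hx := by
    rw [MulAction.mem_fixedBy] at *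
    rw [smul_comm, hx]

variable {e f : A}

@[simp]
lemma mem_fixedSubmodule {x : N} : x ∈ fixedSubmodule K N e ↔ e • x = x := Iff.rfl

namespace leftIdeal

def gen (he : IsIdempotentElem e) : leftIdeal A e := ⟨e, he⟩

lemma smul_gen (he : IsIdempotentElem e) (y : leftIdeal A e) : (y : A) • gen he = y :=
  Subtype.ext y.2

lemma smul_gen_self (he : IsIdempotentElem e) : e • gen he = gen he :=
  smul_gen he (gen he)

lemma hom_ext (he : IsIdempotentElem e) {φ ψ : leftIdeal A e →ₗ[A] N}
    (h : φ (gen he) = ψ (gen he)) : φ = ψ := by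
  ext y
  rw [← smul_gen he y, map_smul, map_smul, h]

def homEquiv (he : IsIdempotentElem e) :
    (leftIdeal A e →ₗ[A] N) ≃ₗ[K] fixedSubmodule K N e where
  toFun φ := ⟨φ (gen he), by rw [mem_fixedSubmodule, ← map_smul, smul_gen_self]⟩
  map_add' _ _ := rfl
  map_smul' _ _ := rfl
  invFun x := (LinearMap.toSpanSingleton A N x).comp (leftIdeal A e).subtype
  left_inv φ := hom_ext he <| show e • φ (gen he) = φ (gen he) by
    rw [← map_smul, smul_gen_self]
  right_inv x := Subtype.ext x.2

lemma finrank_hom_eq_zero [Nontrivial K] (he : IsIdempotentElem e) (h : ∀ x : N, e • x = 0) :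
    Module.finrank K (leftIdeal A e →ₗ[A] N) = 0 :=
  have : Subsingleton (leftIdeal A e →ₗ[A] N) :=
    ⟨fun φ ψ => hom_ext he <| by rw [← smul_gen_self he, map_smul, map_smul, h, h]⟩
  Module.finrank_zero_of_subsingleton

end leftIdeal

namespace DeltaGen

noncomputable def mk : leftIdeal A e →ₗ[A] DeltaGen A e f := (cycSub A e f).mkQ

lemma mk_surjective : Function.Surjective (mk : leftIdeal A e →ₗ[A] DeltaGen A e f) :=
  Submodule.mkQ_surjective _

lemma mk_eq_zero_iff {y : leftIdeal A e} : (mk y : DeltaGen A e f) = 0 ↔ y ∈ cycSub A e f :=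
  Submodule.Quotient.mk_eq_zero _

lemma mk_smul {K : Type} [Field K] [Algebra K A] (c : K) (y : leftIdeal A e) :
    (mk (c • y) : DeltaGen A e f) = c • (mk y : DeltaGen A e f) :=
  Submodule.Quotient.mk_smul _ c y

lemma self_mem_cycSub (hf : f ∈ leftIdeal A e) : ⟨f, hf⟩ ∈ cycSub A e f :=
  Submodule.subset_span rfl

lemma mem_cycSub_iff (hf : f ∈ leftIdeal A e) {y : leftIdeal A e} :
    y ∈ cycSub A e f ↔ ∃ r : A, r • (⟨f, hf⟩ : leftIdeal A e) = y := by
  have : {y : leftIdeal A e | (y : A) = f} = {⟨f, hf⟩} := by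
    ext y
    simp [Subtype.ext_iff]
  rw [cycSub, this, Submodule.mem_span_singleton]

lemma hom_ext (he : IsIdempotentElem e) {φ ψ : DeltaGen A e f →ₗ[A] N}
    (h : φ (mk (leftIdeal.gen he)) = ψ (mk (leftIdeal.gen he))) : φ = ψ := by
  ext x
  obtain ⟨y, rfl⟩ := mk_surjective x
  rw [← leftIdeal.smul_gen he y, map_smul, map_smul, map_smul, h]

noncomputable def homEquiv (he : IsIdempotentElem e) (hf : f ∈ leftIdeal A e) :
    (DeltaGen A e f →ₗ[A] N) ≃ₗ[K]
      ↥(fixedSubmodule K N e ⊓ LinearMap.ker (DistribSMul.toLinearMap K N f)) where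
  toFun φ := ⟨φ (mk (leftIdeal.gen he)), by
    refine ⟨?_, ?_⟩
    · rw [SetLike.mem_coe, mem_fixedSubmodule, ← map_smul, ← map_smul, leftIdeal.smul_gen_self]
    · have hfy : f • leftIdeal.gen he = ⟨f, hf⟩ := leftIdeal.smul_gen he ⟨f, hf⟩
      rw [SetLike.mem_coe, LinearMap.mem_ker, DistribSMul.toLinearMap_apply, ← map_smul,
        ← map_smul, hfy, mk_eq_zero_iff.mpr (self_mem_cycSub hf),
        map_zero]⟩
  map_add' _ _ := rfl
  map_smul' _ _ := rfl
  invFun x := (cycSub A e f).liftQ ((leftIdeal.homEquiv he).symm ⟨x, x.2.1⟩) <| by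
    refine Submodule.span_le.mpr fun y (hy : (y : A) = f) => ?_
    show (y : A) • (x : N) = 0
    rw [hy]
    exact x.2.2
  left_inv φ := hom_ext he <| show e • φ (mk (leftIdeal.gen he)) = φ (mk (leftIdeal.gen he)) by
    rw [← map_smul, ← map_smul, leftIdeal.smul_gen_self]
  right_inv x := Subtype.ext x.2.1

lemma smul_eq_zero {e' : A} (h : ∀ y : leftIdeal A e, e' • y ∈ cycSub A e f)
    (x : DeltaGen A e f) : e' • x = 0 := by
  obtain ⟨y, rfl⟩ := mk_surjective x
  rw [← map_smul, mk_eq_zero_iff]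
  exact h y

lemma finrank_hom_eq_zero [Nontrivial K] (he : IsIdempotentElem e) (h : ∀ x : N, e • x = 0) :
    Module.finrank K (DeltaGen A e f →ₗ[A] N) = 0 :=
  have : Subsingleton (DeltaGen A e f →ₗ[A] N) := ⟨fun φ ψ => hom_ext he <| by
    rw [← leftIdeal.smul_gen_self he, map_smul, map_smul, map_smul, h, h]⟩
  Module.finrank_zero_of_subsingleton

end DeltaGen

end HomsFromCyclicModules

section BurtButler

variable {K : Type} [Field K] {n : ℕ} {P : PosetOn n}
  {R : Subalgebra K (Matrix (Fin n ⊕ Unit) (Fin n ⊕ Unit) K)}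

local notation "Mat" => Matrix (Fin n ⊕ Unit) (Fin n ⊕ Unit) K

lemma coe_apply_inl_inr_eq_zero (hR : (R : Set Mat) = RSet K P) (r : R) (k : Fin n) :
    (r : Mat) (Sum.inl k) (Sum.inr ()) = 0 := by
  have hr : (r : Mat) ∈ RSet K P := hR ▸ r.2
  exact congr_fun (congr_fun hr.2 k) ()

lemma le_of_coe_apply_inl_inl_ne_zero (hR : (R : Set Mat) = RSet K P) (r : R) {a b : Fin n}
    (h : (r : Mat) (Sum.inl a) (Sum.inl b) ≠ 0) : P.le b a := by
  have hr : (r : Mat) ∈ RSet K P := hR ▸ r.2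
  exact hr.1 a b h

lemma single_inl_inl_mem (hR : (R : Set Mat) = RSet K P) {i j : Fin n} (hij : P.le i j) :
    single (Sum.inl j) (Sum.inl i) (1 : K) ∈ R := by
  rw [← SetLike.mem_coe, hR]
  refine ⟨fun a b h => ?_, by ext a b; simp [toBlocks₁₂]⟩
  obtain ⟨rfl, rfl⟩ : j = a ∧ i = b := by
    by_contra hji
    simp_all [toBlocks₁₁, single]
  exact hij

lemma coe_mul_eq_single_of_mem_leftIdeal {e' e y : R} {a b : Fin n ⊕ Unit}
    (he' : (e' : Mat) = single a a 1) (he : (e : Mat) = single b b 1) (hy : y ∈ leftIdeal R e) :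
    ((e' * y : R) : Mat) = single a b ((y : Mat) a b) := by
  have hy' : e' * y = e' * y * e := by rw [mul_assoc, hy]
  rw [hy', Subalgebra.coe_mul, Subalgebra.coe_mul, he', he, single_mul_mul_single, one_mul,
    mul_one]

lemma isIdempotentElem_of_coe_eq_single {e : R} {a : Fin n ⊕ Unit}
    (he : (e : Mat) = single a a 1) : IsIdempotentElem e :=
  Subtype.ext <| by rw [Subalgebra.coe_mul, he, single_mul_single_same, one_mul]

lemma mem_leftIdeal_of_coe_eq_single {e f : R} {a b : Fin n ⊕ Unit}
    (he : (e : Mat) = single b b 1) (hf : (f : Mat) = single a b 1) : f ∈ leftIdeal R e :=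
  Subtype.ext <| by rw [Subalgebra.coe_mul, he, hf, single_mul_single_same, one_mul]

lemma smul_leftIdeal_inr_eq_zero (hR : (R : Set Mat) = RSet K P) {e0 ek : R} {k : Fin n}
    (he0 : (e0 : Mat) = single (Sum.inr ()) (Sum.inr ()) 1)
    (hek : (ek : Mat) = single (Sum.inl k) (Sum.inl k) 1) (x : leftIdeal R e0) :
    ek • x = 0 := by
  refine Subtype.ext <| Subtype.ext ?_
  change ((ek * x : R) : Mat) = 0
  rw [coe_mul_eq_single_of_mem_leftIdeal hek he0 x.2, coe_apply_inl_inr_eq_zero hR, single_zero]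

lemma smul_deltaGen_eq_zero_of_not_le (hR : (R : Set Mat) = RSet K P) {ei ej Ei : R}
    {i j : Fin n} (hei : (ei : Mat) = single (Sum.inl i) (Sum.inl i) 1)
    (hej : (ej : Mat) = single (Sum.inl j) (Sum.inl j) 1) (hij : ¬ P.le i j)
    (x : DeltaGen R ei Ei) : ej • x = 0 := by
  refine DeltaGen.smul_eq_zero (fun y => ?_) x
  convert (cycSub R ei Ei).zero_mem
  refine Subtype.ext <| Subtype.ext ?_
  change ((ej * y : R) : Mat) = 0
  rw [coe_mul_eq_single_of_mem_leftIdeal hej hei y.2,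
    not_imp_comm.mp (le_of_coe_apply_inl_inl_ne_zero hR _) hij, single_zero]

lemma inr_smul_deltaGen_eq_zero {e0 ek Ek : R} {k : Fin n}
    (he0 : (e0 : Mat) = single (Sum.inr ()) (Sum.inr ()) 1)
    (hek : (ek : Mat) = single (Sum.inl k) (Sum.inl k) 1)
    (hEk : (Ek : Mat) = single (Sum.inr ()) (Sum.inl k) 1) (x : DeltaGen R ek Ek) :
    e0 • x = 0 := by
  have hEk' := mem_leftIdeal_of_coe_eq_single hek hEk
  refine DeltaGen.smul_eq_zero (fun y => ?_) x
  convert Submodule.smul_of_tower_mem _ ((y : Mat) (Sum.inr ()) (Sum.inl k))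
    (DeltaGen.self_mem_cycSub hEk')
  refine Subtype.ext <| Subtype.ext ?_
  change ((e0 * y : R) : Mat) = _
  rw [coe_mul_eq_single_of_mem_leftIdeal he0 hek y.2]
  simp [hEk, smul_single]

lemma finrank_fixedSubmodule_leftIdeal_inr {e0 : R}
    (he0 : (e0 : Mat) = single (Sum.inr ()) (Sum.inr ()) 1) :
    Module.finrank K (fixedSubmodule K (leftIdeal R e0) e0) = 1 := by
  have he0' := isIdempotentElem_of_coe_eq_single he0
  refine Submodule.finrank_eq_one_of_le_span_singleton (leftIdeal.smul_gen_self he0') ?_ ?_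
  · intro h
    have := congr_arg (fun x : leftIdeal R e0 => ((x : R) : Mat) (Sum.inr ()) (Sum.inr ())) h
    simp [leftIdeal.gen, he0] at this
  · intro x (hx : e0 • x = x)
    refine Submodule.mem_span_singleton.mpr ⟨((x : R) : Mat) (Sum.inr ()) (Sum.inr ()), ?_⟩
    refine Subtype.ext <| Subtype.ext ?_
    rw [← hx]
    change _ = ((e0 * x : R) : Mat)
    rw [coe_mul_eq_single_of_mem_leftIdeal he0 he0 x.2]
    simp [leftIdeal.gen, he0, smul_single]

lemma finrank_fixedSubmodule_inf_ker_deltaGen_of_le (hR : (R : Set Mat) = RSet K P)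
    {ei ej Ei Ej : R} {i j : Fin n} (hei : (ei : Mat) = single (Sum.inl i) (Sum.inl i) 1)
    (hej : (ej : Mat) = single (Sum.inl j) (Sum.inl j) 1)
    (hEi : (Ei : Mat) = single (Sum.inr ()) (Sum.inl i) 1)
    (hEj : (Ej : Mat) = single (Sum.inr ()) (Sum.inl j) 1) (hij : P.le i j) :
    Module.finrank K ↥(fixedSubmodule K (DeltaGen R ei Ei) ej ⊓
      LinearMap.ker (DistribSMul.toLinearMap K (DeltaGen R ei Ei) Ej)) = 1 := by
  set E : R := ⟨single (Sum.inl j) (Sum.inl i) 1, single_inl_inl_mem hR hij⟩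
  have hE : (E : Mat) = single (Sum.inl j) (Sum.inl i) 1 := rfl
  have hEmem := mem_leftIdeal_of_coe_eq_single hei hE
  have hEimem := mem_leftIdeal_of_coe_eq_single hei hEi
  have hejy (y : leftIdeal R ei) :
      ej • y = ((y : R) : Mat) (Sum.inl j) (Sum.inl i) • (⟨E, hEmem⟩ : leftIdeal R ei) := by
    refine Subtype.ext <| Subtype.ext ?_
    change ((ej * y : R) : Mat) = _
    rw [coe_mul_eq_single_of_mem_leftIdeal hej hei y.2]
    simp [hE, smul_single]
  refine Submodule.finrank_eq_one_of_le_span_singleton (v := DeltaGen.mk ⟨E, hEmem⟩)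
    ⟨?_, ?_⟩ ?_ ?_
  · change ej • DeltaGen.mk _ = _
    rw [← map_smul, hejy]
    simp [hE]
  · change Ej • DeltaGen.mk _ = (0 : DeltaGen R ei Ei)
    rw [← map_smul, DeltaGen.mk_eq_zero_iff]
    convert DeltaGen.self_mem_cycSub hEimem using 1
    refine Subtype.ext <| Subtype.ext ?_
    change ((Ej * E : R) : Mat) = Ei
    rw [Subalgebra.coe_mul, hEj, hE, hEi, single_mul_single_same, one_mul]
  · rw [Ne, DeltaGen.mk_eq_zero_iff, DeltaGen.mem_cycSub_iff hEimem]
    rintro ⟨r, hr⟩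
    have := congr_arg (fun x : leftIdeal R ei => ((x : R) : Mat) (Sum.inl j) (Sum.inl i)) hr
    simp [hE, hEi, coe_apply_inl_inr_eq_zero hR] at this
  · rintro x ⟨hx, -⟩
    obtain ⟨y, rfl⟩ := DeltaGen.mk_surjective x
    refine Submodule.mem_span_singleton.mpr ⟨((y : R) : Mat) (Sum.inl j) (Sum.inl i), ?_⟩
    rw [← DeltaGen.mk_smul, ← hejy, map_smul]
    exact hx

end BurtButler

theorem stmt17_general {K : Type} [Field K] {n : ℕ} (P : PosetOn n)
    (R : Subalgebra K (Matrix (Fin n ⊕ Unit) (Fin n ⊕ Unit) K))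
    (hR : (R : Set (Matrix (Fin n ⊕ Unit) (Fin n ⊕ Unit) K)) = RSet K P)
    (e0 : R) (he0 : (e0 : Matrix (Fin n ⊕ Unit) (Fin n ⊕ Unit) K)
      = Matrix.single (Sum.inr ()) (Sum.inr ()) 1)
    (ee : Fin n → R) (hee : ∀ k, (ee k : Matrix (Fin n ⊕ Unit) (Fin n ⊕ Unit) K)
      = Matrix.single (Sum.inl k) (Sum.inl k) 1)
    (EE : Fin n → R) (hEE : ∀ k, (EE k : Matrix (Fin n ⊕ Unit) (Fin n ⊕ Unit) K)
      = Matrix.single (Sum.inr ()) (Sum.inl k) 1) :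
    (∀ i j : Fin n, P.le i j →
      Module.finrank K (DeltaGen R (ee j) (EE j) →ₗ[R] DeltaGen R (ee i) (EE i)) = 1) ∧
    (∀ i j : Fin n, ¬ P.le i j →
      Module.finrank K (DeltaGen R (ee j) (EE j) →ₗ[R] DeltaGen R (ee i) (EE i)) = 0) ∧
    Module.finrank K (↥(leftIdeal R e0) →ₗ[R] ↥(leftIdeal R e0)) = 1 ∧
    (∀ k : Fin n,
      Module.finrank K (↥(leftIdeal R e0) →ₗ[R] DeltaGen R (ee k) (EE k)) = 0 ∧
      Module.finrank K (DeltaGen R (ee k) (EE k) →ₗ[R] ↥(leftIdeal R e0)) = 0) := by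
  have he0' := isIdempotentElem_of_coe_eq_single he0
  have hee' k := isIdempotentElem_of_coe_eq_single (hee k)
  have hEE' k := mem_leftIdeal_of_coe_eq_single (hee k) (hEE k)
  refine ⟨fun i j hij => ?_, fun i j hij => ?_, ?_, fun k => ⟨?_, ?_⟩⟩
  · rw [(DeltaGen.homEquiv (hee' j) (hEE' j)).finrank_eq]
    exact finrank_fixedSubmodule_inf_ker_deltaGen_of_le hR (hee i) (hee j) (hEE i) (hEE j) hij
  · exact DeltaGen.finrank_hom_eq_zero (hee' j)
      (smul_deltaGen_eq_zero_of_not_le hR (hee i) (hee j) hij)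
  · rw [(leftIdeal.homEquiv he0').finrank_eq]
    exact finrank_fixedSubmodule_leftIdeal_inr he0
  · exact leftIdeal.finrank_hom_eq_zero he0' (inr_smul_deltaGen_eq_zero he0 (hee k) (hEE k))
  · exact DeltaGen.finrank_hom_eq_zero (hee' k) (smul_leftIdeal_inr_eq_zero hR he0 (hee k))

/-- Dimensions of homomorphism spaces between standard modules of the right Burt–Butler
algebra `R`: `Hom_R(Δ(j), Δ(i))` is one-dimensional when `i ⪯ j` in `𝒫` or `i = j = 0`,
and zero otherwise. Here `Δ(k) = Re_k/K·E_{n+1,k}` for `k ∈ 𝒫` and `Δ(0) = Re₀`. -/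
theorem stmt17 {K : Type} [Field K] [IsAlgClosed K] {n : ℕ} (hn : 1 ≤ n) (P : PosetOn n)
    (R : Subalgebra K (Matrix (Fin n ⊕ Unit) (Fin n ⊕ Unit) K))
    (hR : (R : Set (Matrix (Fin n ⊕ Unit) (Fin n ⊕ Unit) K)) = RSet K P)
    (e0 : R) (he0 : (e0 : Matrix (Fin n ⊕ Unit) (Fin n ⊕ Unit) K)
      = Matrix.single (Sum.inr ()) (Sum.inr ()) 1)
    (ee : Fin n → R) (hee : ∀ k, (ee k : Matrix (Fin n ⊕ Unit) (Fin n ⊕ Unit) K)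
      = Matrix.single (Sum.inl k) (Sum.inl k) 1)
    (EE : Fin n → R) (hEE : ∀ k, (EE k : Matrix (Fin n ⊕ Unit) (Fin n ⊕ Unit) K)
      = Matrix.single (Sum.inr ()) (Sum.inl k) 1) :
    (∀ i j : Fin n, P.le i j →
      Module.finrank K (DeltaGen R (ee j) (EE j) →ₗ[R] DeltaGen R (ee i) (EE i)) = 1) ∧
    (∀ i j : Fin n, ¬ P.le i j →
      Module.finrank K (DeltaGen R (ee j) (EE j) →ₗ[R] DeltaGen R (ee i) (EE i)) = 0) ∧
    Module.finrank K (↥(leftIdeal R e0) →ₗ[R] ↥(leftIdeal R e0)) = 1 ∧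
    (∀ k : Fin n,
      Module.finrank K (↥(leftIdeal R e0) →ₗ[R] DeltaGen R (ee k) (EE k)) = 0 ∧
      Module.finrank K (DeltaGen R (ee k) (EE k) →ₗ[R] ↥(leftIdeal R e0)) = 0) :=
  stmt17_general P R hR e0 he0 ee hee EE hEE
end
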